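/- arXiv:math/0209268 — 8 statements merged into one kernel-verified Lean document; each statement's English description precedes it below -/
import Mathlib

section
/- Let q be a real number with 0 < q < 1 and let H = ℓ²(ℕ) be the Hilbert space of square-summable complex sequences with standard orthonormal basis (e_k)_{k∈ℕ}. Then there exist bounded linear operators ρP, ρT, ρR on H determined on the basis by ρP e_k = q^{4k} e_k, ρT e_k = q^{2(k−1)} √(1−q^{4k}) e_{k−1}, ρR e_k = √((1−q^{4k})(1−q^{4(k−1)})) e_{k−2} (all coefficients of terms that would involve a negative index vanish), and these operators satisfy: ρP is self-adjoint, ρR ∘ ρP = q⁸ ρP ∘ ρR, ρR ∘ ρT = q⁴ ρT ∘ ρR, and ρP ∘ ρT = q⁻⁴ ρT ∘ ρP. -/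
open scoped BigOperators ComplexConjugate

noncomputable section Stmt0Aux

namespace Stmt0Aux

local notation "E2" => lp (fun _ : ℕ => ℂ) 2

lemma hp2 : (0:ℝ) < (2 : ENNReal).toReal := by norm_num

lemma memℓp_shift (d : ℕ) (c : ℕ → ℝ) (C : ℝ) (hC0 : 0 ≤ C) (hC : ∀ n, |c n| ≤ C)
    (f : E2) : Memℓp (fun n => ((c (n + d) : ℝ) : ℂ) * f (n + d)) 2 := by
  apply memℓp_gen
  have hsum : Summable fun n : ℕ => ‖f (n + d)‖ ^ (2 : ENNReal).toReal :=
    ((lp.memℓp f).summable hp2).comp_injective (fun a b h => by omega)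
  refine Summable.of_nonneg_of_le (fun n => Real.rpow_nonneg (norm_nonneg _) _)
    (fun n => ?_) (hsum.mul_left (C ^ (2 : ENNReal).toReal))
  calc ‖((c (n + d) : ℝ) : ℂ) * f (n + d)‖ ^ (2 : ENNReal).toReal
      ≤ (C * ‖f (n + d)‖) ^ (2 : ENNReal).toReal := by
        apply Real.rpow_le_rpow (norm_nonneg _) _ hp2.le
        rw [norm_mul, Complex.norm_real, Real.norm_eq_abs]
        exact mul_le_mul_of_nonneg_right (hC _) (norm_nonneg _)
    _ = C ^ (2 : ENNReal).toReal * ‖f (n + d)‖ ^ (2 : ENNReal).toReal :=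
        Real.mul_rpow hC0 (norm_nonneg _)

/-- weighted shift: `(wshift d c f) n = c (n+d) * f (n+d)`. -/
def wshift (d : ℕ) (c : ℕ → ℝ) (C : ℝ) (hC0 : 0 ≤ C) (hC : ∀ n, |c n| ≤ C) :
    E2 →L[ℂ] E2 :=
  LinearMap.mkContinuous
    { toFun := fun f => (⟨fun n => ((c (n + d) : ℝ) : ℂ) * f (n + d),
        memℓp_shift d c C hC0 hC f⟩ : E2)
      map_add' := fun f g => by
        apply lp.ext
        funext n
        simp only [lp.coeFn_add, Pi.add_apply]
        ring
      map_smul' := fun a f => by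
        apply lp.ext
        funext n
        simp only [lp.coeFn_smul, Pi.smul_apply, RingHom.id_apply, smul_eq_mul]
        ring }
    C
    (by
      intro f
      refine lp.norm_le_of_forall_sum_le hp2 (by positivity) (fun s => ?_)
      have key : ∀ n ∈ s, ‖((c (n + d) : ℝ) : ℂ) * f (n + d)‖ ^ (2 : ENNReal).toReal
          ≤ C ^ (2 : ENNReal).toReal * ‖f (n + d)‖ ^ (2 : ENNReal).toReal := by
        intro n _
        rw [← Real.mul_rpow hC0 (norm_nonneg _)]
        apply Real.rpow_le_rpow (norm_nonneg _) _ hp2.le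
        rw [norm_mul, Complex.norm_real, Real.norm_eq_abs]
        exact mul_le_mul_of_nonneg_right (hC _) (norm_nonneg _)
      calc ∑ n ∈ s, ‖((c (n + d) : ℝ) : ℂ) * f (n + d)‖ ^ (2 : ENNReal).toReal
          ≤ ∑ n ∈ s, C ^ (2 : ENNReal).toReal * ‖f (n + d)‖ ^ (2 : ENNReal).toReal :=
            Finset.sum_le_sum key
        _ = C ^ (2 : ENNReal).toReal * ∑ n ∈ s, ‖f (n + d)‖ ^ (2 : ENNReal).toReal := by
            rw [Finset.mul_sum]
        _ = C ^ (2 : ENNReal).toReal *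
              ∑ i ∈ s.image (· + d), ‖f i‖ ^ (2 : ENNReal).toReal := by
            rw [Finset.sum_image (fun a _ b _ h => by omega)]
        _ ≤ C ^ (2 : ENNReal).toReal * ‖f‖ ^ (2 : ENNReal).toReal := by
            exact mul_le_mul_of_nonneg_left (lp.sum_rpow_le_norm_rpow hp2 f _)
              (Real.rpow_nonneg hC0 _)
        _ = (C * ‖f‖) ^ (2 : ENNReal).toReal :=
            (Real.mul_rpow hC0 (norm_nonneg _)).symm)

lemma wshift_apply (d : ℕ) (c : ℕ → ℝ) (C : ℝ) (hC0 : 0 ≤ C) (hC : ∀ n, |c n| ≤ C)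
    (f : E2) (n : ℕ) :
    (wshift d c C hC0 hC f) n = ((c (n + d) : ℝ) : ℂ) * f (n + d) := rfl

lemma wshift_single_add (d : ℕ) (c : ℕ → ℝ) (C : ℝ) (hC0 : 0 ≤ C) (hC : ∀ n, |c n| ≤ C)
    (m : ℕ) :
    wshift d c C hC0 hC (lp.single 2 (m + d) 1) = ((c (m + d) : ℝ) : ℂ) • lp.single 2 m 1 := by
  apply lp.ext
  funext n
  rw [wshift_apply]
  simp only [lp.coeFn_smul, Pi.smul_apply, smul_eq_mul]
  rcases eq_or_ne n m with rfl | hnm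
  · rw [lp.single_apply_self, lp.single_apply_self]
  · rw [lp.single_apply_ne _ _ _ hnm, lp.single_apply_ne _ _ _ (by omega), mul_zero, mul_zero]

lemma wshift_single_lt (d : ℕ) (c : ℕ → ℝ) (C : ℝ) (hC0 : 0 ≤ C) (hC : ∀ n, |c n| ≤ C)
    (k : ℕ) (hk : k < d) :
    wshift d c C hC0 hC (lp.single 2 k 1) = 0 := by
  apply lp.ext
  funext n
  rw [wshift_apply]
  simp only [lp.coeFn_zero, Pi.zero_apply]
  rw [lp.single_apply_ne _ _ _ (by omega), mul_zero]

end Stmt0Aux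

end Stmt0Aux

open Stmt0Aux in
/-- For `0 < q < 1` and `H = ℓ²(ℕ)` (an abstract Hilbert space with an
orthonormal basis `(e k)_{k ∈ ℕ}`), there exist bounded operators `ρP, ρT, ρR` acting on the
basis by `ρP e_k = q^{4k} e_k`, `ρT e_k = q^{2(k-1)} √(1-q^{4k}) e_{k-1}`,
`ρR e_k = √((1-q^{4k})(1-q^{4(k-1)})) e_{k-2}` (terms with negative index vanish), such that
`ρP` is self-adjoint, `ρR ρP = q⁸ ρP ρR`, `ρR ρT = q⁴ ρT ρR`, `ρP ρT = q⁻⁴ ρT ρP`. -/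
theorem stmt0 {H : Type*} [NormedAddCommGroup H] [InnerProductSpace ℂ H] [CompleteSpace H]
    (e : HilbertBasis ℕ ℂ H) (q : ℝ) (hq0 : 0 < q) (hq1 : q < 1) :
    ∃ ρP ρT ρR : H →L[ℂ] H,
      (∀ k : ℕ, ρP (e k) = ((q ^ (4 * k) : ℝ) : ℂ) • e k) ∧
      (ρT (e 0) = 0) ∧
      (∀ k : ℕ, ρT (e (k + 1)) =
        ((q ^ (2 * k) * Real.sqrt (1 - q ^ (4 * (k + 1))) : ℝ) : ℂ) • e k) ∧
      (ρR (e 0) = 0) ∧ (ρR (e 1) = 0) ∧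
      (∀ k : ℕ, ρR (e (k + 2)) =
        ((Real.sqrt ((1 - q ^ (4 * (k + 2))) * (1 - q ^ (4 * (k + 1)))) : ℝ) : ℂ) • e k) ∧
      IsSelfAdjoint ρP ∧
      ρR * ρP = ((q : ℂ) ^ 8) • (ρP * ρR) ∧
      ρR * ρT = ((q : ℂ) ^ 4) • (ρT * ρR) ∧
      ρP * ρT = (((q : ℂ) ^ 4)⁻¹) • (ρT * ρP) := by
  classical
  have hq0' : (0:ℝ) ≤ q := hq0.le
  have hqpow_le_one : ∀ n : ℕ, q ^ n ≤ 1 := fun n => pow_le_one₀ hq0' hq1.le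
  have hqpow_nonneg : ∀ n : ℕ, (0:ℝ) ≤ q ^ n := fun n => pow_nonneg hq0' n
  have hsub_nonneg : ∀ n : ℕ, (0:ℝ) ≤ 1 - q ^ n := fun n => by
    have := hqpow_le_one n; linarith
  have hsqrt_le_one : ∀ n : ℕ, Real.sqrt (1 - q ^ n) ≤ 1 := fun n =>
    Real.sqrt_le_one.mpr (by linarith [hqpow_nonneg n])
  -- coefficient sequences
  set cP : ℕ → ℝ := fun n => q ^ (4 * n) with hcP
  set cT : ℕ → ℝ := fun n => q ^ (2 * (n - 1)) * Real.sqrt (1 - q ^ (4 * n)) with hcT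
  set cR : ℕ → ℝ := fun n => Real.sqrt ((1 - q ^ (4 * n)) * (1 - q ^ (4 * (n - 1)))) with hcR
  have hbP : ∀ n, |cP n| ≤ 1 := fun n => by
    rw [abs_of_nonneg (hqpow_nonneg _)]; exact hqpow_le_one _
  have hbT : ∀ n, |cT n| ≤ 1 := fun n => by
    rw [abs_of_nonneg (mul_nonneg (hqpow_nonneg _) (Real.sqrt_nonneg _))]
    exact mul_le_one₀ (hqpow_le_one _) (Real.sqrt_nonneg _) (hsqrt_le_one _)
  have hbR : ∀ n, |cR n| ≤ 1 := fun n => by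
    rw [abs_of_nonneg (Real.sqrt_nonneg _)]
    exact Real.sqrt_le_one.mpr
      (mul_le_one₀ (by linarith [hqpow_nonneg (4*n)]) (hsub_nonneg _) (by linarith [hqpow_nonneg (4*(n-1))]))
  -- operators on lp
  set TP := wshift 0 cP 1 zero_le_one hbP with hTP
  set TT := wshift 1 cT 1 zero_le_one hbT with hTT
  set TR := wshift 2 cR 1 zero_le_one hbR with hTR
  -- conjugation to H
  let U : H →L[ℂ] lp (fun _ : ℕ => ℂ) 2 := (e.repr.toContinuousLinearEquiv :
    H ≃L[ℂ] lp (fun _ : ℕ => ℂ) 2)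
  let V : lp (fun _ : ℕ => ℂ) 2 →L[ℂ] H := (e.repr.symm.toContinuousLinearEquiv :
    lp (fun _ : ℕ => ℂ) 2 ≃L[ℂ] H)
  have hU : ∀ k : ℕ, U (e k) = lp.single 2 k 1 := fun k => by
    show e.repr.toContinuousLinearEquiv (e k) = _
    rw [LinearIsometryEquiv.coe_toContinuousLinearEquiv]
    exact e.repr_self k
  have hV : ∀ (a : ℂ) (m : ℕ), V (a • lp.single 2 m 1) = a • e m := fun a m => by
    show e.repr.symm.toContinuousLinearEquiv _ = _
    rw [LinearIsometryEquiv.coe_toContinuousLinearEquiv, map_smul, e.repr_symm_single]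
  have hV0 : V 0 = 0 := map_zero V
  set ρP : H →L[ℂ] H := V ∘L TP ∘L U with hρP
  set ρT : H →L[ℂ] H := V ∘L TT ∘L U with hρT
  set ρR : H →L[ℂ] H := V ∘L TR ∘L U with hρR
  have hP : ∀ k : ℕ, ρP (e k) = ((q ^ (4 * k) : ℝ) : ℂ) • e k := by
    intro k
    show V (TP (U (e k))) = _
    rw [hU, hTP]
    rw [show k = k + 0 from rfl, wshift_single_add, hV]
    norm_num [hcP]
  have hT0 : ρT (e 0) = 0 := by
    show V (TT (U (e 0))) = 0
    rw [hU, hTT, wshift_single_lt _ _ _ _ _ 0 (by omega), hV0]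
  have hT : ∀ k : ℕ, ρT (e (k + 1)) =
      ((q ^ (2 * k) * Real.sqrt (1 - q ^ (4 * (k + 1))) : ℝ) : ℂ) • e k := by
    intro k
    show V (TT (U (e (k+1)))) = _
    rw [hU, hTT, wshift_single_add, hV]
    norm_num [hcT]
  have hR0 : ρR (e 0) = 0 := by
    show V (TR (U (e 0))) = 0
    rw [hU, hTR, wshift_single_lt _ _ _ _ _ 0 (by omega), hV0]
  have hR1 : ρR (e 1) = 0 := by
    show V (TR (U (e 1))) = 0
    rw [hU, hTR, wshift_single_lt _ _ _ _ _ 1 (by omega), hV0]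
  have hR : ∀ k : ℕ, ρR (e (k + 2)) =
      ((Real.sqrt ((1 - q ^ (4 * (k + 2))) * (1 - q ^ (4 * (k + 1)))) : ℝ) : ℂ) • e k := by
    intro k
    show V (TR (U (e (k+2)))) = _
    rw [hU, hTR, wshift_single_add, hV]
    norm_num [hcR]
  have hdense : Dense (Submodule.span ℂ (Set.range (e : ℕ → H)) : Set H) :=
    Submodule.dense_iff_topologicalClosure_eq_top.mpr e.dense_span
  have hext : ∀ (A B : H →L[ℂ] H), (∀ k : ℕ, A (e k) = B (e k)) → A = B := by
    intro A B h
    refine ContinuousLinearMap.ext_on hdense ?_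
    rintro x ⟨k, rfl⟩
    exact h k
  have hqC : (q : ℂ) ≠ 0 := by exact_mod_cast hq0.ne'
  have hsa : IsSelfAdjoint ρP := by
    rw [ContinuousLinearMap.isSelfAdjoint_iff']
    apply hext
    intro k
    apply e.repr.injective
    apply lp.ext
    funext j
    rw [e.repr_apply_apply, e.repr_apply_apply, ContinuousLinearMap.adjoint_inner_right,
      hP k, hP j, inner_smul_left, inner_smul_right]
    rw [orthonormal_iff_ite.mp e.orthonormal j k]
    rcases eq_or_ne j k with rfl | hjk
    · simp [Complex.conj_ofReal]
    · simp [hjk]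
  have hRP : ρR * ρP = ((q : ℂ) ^ 8) • (ρP * ρR) := by
    apply hext
    intro k
    match k with
    | 0 => simp [ContinuousLinearMap.mul_apply, hP, hR0, map_smul]
    | 1 => simp [ContinuousLinearMap.mul_apply, hP, hR1, map_smul]
    | (m+2) =>
      simp only [ContinuousLinearMap.mul_apply, ContinuousLinearMap.smul_apply, hP, map_smul,
        hR, smul_smul]
      congr 1
      push_cast
      ring
  have hRT : ρR * ρT = ((q : ℂ) ^ 4) • (ρT * ρR) := by
    apply hext
    intro k
    match k with
    | 0 => simp [ContinuousLinearMap.mul_apply, hT0, hR0, map_smul]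
    | 1 => simp [ContinuousLinearMap.mul_apply, hT 0, hR0, hR1, map_smul]
    | 2 => simp [ContinuousLinearMap.mul_apply, hT 1, hT0, hR 0, hR1, map_smul]
    | (m+3) =>
      have hTa : ρT (e (m+3)) =
          ((q ^ (2*(m+2)) * Real.sqrt (1 - q ^ (4*(m+3))) : ℝ) : ℂ) • e (m+2) := hT (m+2)
      have hRa : ρR (e (m+3)) =
          ((Real.sqrt ((1 - q ^ (4*(m+3))) * (1 - q ^ (4*(m+2)))) : ℝ) : ℂ) • e (m+1) :=
        hR (m+1)
      simp only [ContinuousLinearMap.mul_apply, ContinuousLinearMap.smul_apply, map_smul,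
        hTa, hRa, hR m, hT m, smul_smul]
      congr 1
      have h1 : Real.sqrt ((1 - q ^ (4 * (m + 3))) * (1 - q ^ (4 * (m + 2))))
          = Real.sqrt (1 - q ^ (4 * (m + 3))) * Real.sqrt (1 - q ^ (4 * (m + 2))) :=
        Real.sqrt_mul (hsub_nonneg _) _
      have h2 : Real.sqrt ((1 - q ^ (4 * (m + 2))) * (1 - q ^ (4 * (m + 1))))
          = Real.sqrt (1 - q ^ (4 * (m + 2))) * Real.sqrt (1 - q ^ (4 * (m + 1))) :=
        Real.sqrt_mul (hsub_nonneg _) _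
      push_cast [h1, h2]
      ring
  have hPT : ρP * ρT = (((q : ℂ) ^ 4)⁻¹) • (ρT * ρP) := by
    apply hext
    intro k
    match k with
    | 0 => simp [ContinuousLinearMap.mul_apply, hT0, hP, map_smul]
    | (m+1) =>
      simp only [ContinuousLinearMap.mul_apply, ContinuousLinearMap.smul_apply, map_smul,
        hT, hP, smul_smul]
      congr 1
      push_cast
      field_simp
      ring
  exact ⟨ρP, ρT, ρR, hP, hT0, hT, hR0, hR1, hR, hsa, hRP, hRT, hPT⟩
end

section
/- The operators ρP, ρT, ρR satisfy the relations ρT ∘ ρT = q² ρP ∘ ρR, ρR ∘ ρT* = q² ρT ∘ (1 − q⁴ ρP), and ρR* ∘ ρT = q⁻² ρT* ∘ (1 − ρP), where * denotes the Hilbert-space adjoint and 1 the identity operator. -/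
open scoped InnerProductSpace

section Aux

variable {H : Type*} [NormedAddCommGroup H] [InnerProductSpace ℂ H] [CompleteSpace H]

lemma hb_ext_inner (e : HilbertBasis ℕ ℂ H) {x y : H}
    (h : ∀ i, ⟪e i, x⟫_ℂ = ⟪e i, y⟫_ℂ) : x = y :=
  e.repr.injective (by ext i; simpa [e.repr_apply_apply] using h i)

lemma hb_clm_ext (e : HilbertBasis ℕ ℂ H) {f g : H →L[ℂ] H}
    (h : ∀ i, f (e i) = g (e i)) : f = g := by
  refine ContinuousLinearMap.ext_on
    (Submodule.dense_iff_topologicalClosure_eq_top.mpr e.dense_span) ?_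
  rintro _ ⟨i, rfl⟩
  exact h i

end Aux

open ContinuousLinearMap in
/-- The operators `ρP, ρT, ρR` on `ℓ²(ℕ)` satisfy
`ρT ρT = q² ρP ρR`, `ρR ρT* = q² ρT (1 - q⁴ ρP)` and `ρR* ρT = q⁻² ρT* (1 - ρP)`. -/
theorem stmt1 {H : Type*} [NormedAddCommGroup H] [InnerProductSpace ℂ H] [CompleteSpace H]
    (e : HilbertBasis ℕ ℂ H) (q : ℝ) (hq0 : 0 < q) (hq1 : q < 1)
    (ρP ρT ρR : H →L[ℂ] H)
    (hP : ∀ k : ℕ, ρP (e k) = ((q ^ (4 * k) : ℝ) : ℂ) • e k)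
    (hT0 : ρT (e 0) = 0)
    (hT : ∀ k : ℕ, ρT (e (k + 1)) =
      ((q ^ (2 * k) * Real.sqrt (1 - q ^ (4 * (k + 1))) : ℝ) : ℂ) • e k)
    (hR0 : ρR (e 0) = 0) (hR1 : ρR (e 1) = 0)
    (hR : ∀ k : ℕ, ρR (e (k + 2)) =
      ((Real.sqrt ((1 - q ^ (4 * (k + 2))) * (1 - q ^ (4 * (k + 1)))) : ℝ) : ℂ) • e k) :
    ρT * ρT = ((q : ℂ) ^ 2) • (ρP * ρR) ∧
    ρR * adjoint ρT = ((q : ℂ) ^ 2) • (ρT * (1 - ((q : ℂ) ^ 4) • ρP)) ∧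
    adjoint ρR * ρT = (((q : ℂ) ^ 2)⁻¹) • (adjoint ρT * (1 - ρP)) := by
  have horth := e.orthonormal
  have hinner : ∀ i j : ℕ, ⟪e i, e j⟫_ℂ = if i = j then 1 else 0 :=
    orthonormal_iff_ite.mp horth
  have hne : ∀ n : ℕ, (0:ℝ) ≤ 1 - q ^ n := fun n => by
    have := pow_le_one₀ hq0.le hq1.le (n := n); linarith
  -- adjoint of ρT on basis vectors
  have hT' : ∀ k : ℕ, adjoint ρT (e k) =
      ((q ^ (2 * k) * Real.sqrt (1 - q ^ (4 * (k + 1))) : ℝ) : ℂ) • e (k + 1) := by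
    intro k
    apply hb_ext_inner e
    intro j
    rw [ContinuousLinearMap.adjoint_inner_right, inner_smul_right, hinner]
    cases j with
    | zero => simp [hT0, hinner]
    | succ m =>
      rw [hT m, inner_smul_left, hinner]
      by_cases h : m = k
      · subst h; simp
      · simp [h, fun hh => h (Nat.succ_injective hh)]
  -- adjoint of ρR on basis vectors
  have hR' : ∀ k : ℕ, adjoint ρR (e k) =
      ((Real.sqrt ((1 - q ^ (4 * (k + 2))) * (1 - q ^ (4 * (k + 1)))) : ℝ) : ℂ) • e (k + 2) := by
    intro k
    apply hb_ext_inner e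
    intro j
    rw [ContinuousLinearMap.adjoint_inner_right, inner_smul_right, hinner]
    match j with
    | 0 => simp [hR0, hinner]
    | 1 => simp [hR1, hinner]
    | (m+2) =>
      rw [hR m, inner_smul_left, hinner]
      by_cases h : m = k
      · subst h; simp
      · have : ¬ (m + 2 = k + 2) := fun hh => h (by omega)
        simp [h, this]
  refine ⟨?_, ?_, ?_⟩
  · -- ρT ρT = q² ρP ρR
    apply hb_clm_ext e
    intro k
    match k with
    | 0 => simp [ContinuousLinearMap.mul_apply, hT0, hR0]
    | 1 => simp [ContinuousLinearMap.mul_apply, hT 0, hT0, hR1]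
    | (m+2) =>
      simp only [ContinuousLinearMap.mul_apply, ContinuousLinearMap.smul_apply,
        hR m, hT (m+1), map_smul, hT m, hP m, smul_smul]
      congr 1
      push_cast
      rw [Real.sqrt_mul (hne _)]
      push_cast
      ring
  · -- ρR ρT* = q² ρT (1 - q⁴ ρP)
    apply hb_clm_ext e
    intro k
    simp only [ContinuousLinearMap.mul_apply, ContinuousLinearMap.smul_apply,
      ContinuousLinearMap.sub_apply, ContinuousLinearMap.one_apply, hT' k, hP k, map_smul]
    match k with
    | 0 =>
      simp [hR1, hT0, smul_sub]
    | (m+1) =>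
      simp only [show m+1+1 = m+2 from rfl]
      rw [hR m]
      rw [show ((q:ℂ)^2) • ρT ((e (m+1)) - ((q:ℂ)^4) • (((q ^ (4*(m+1)) : ℝ):ℂ) • e (m+1)))
        = ((q:ℂ)^2 - (q:ℂ)^2 * (q:ℂ)^4 * ((q ^ (4*(m+1)) : ℝ):ℂ)) • ρT (e (m+1)) by
          rw [map_sub, map_smul, map_smul]; module]
      rw [hT m, smul_smul, smul_smul]
      congr 1
      norm_cast
      rw [Real.sqrt_mul (hne _)]
      linear_combination (q^(2*(m+1)) * Real.sqrt (1 - q^(4*(m+1)))) *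
        Real.mul_self_sqrt (hne (4*(m+2)))
  · -- ρR* ρT = q⁻² ρT* (1 - ρP)
    apply hb_clm_ext e
    intro k
    simp only [ContinuousLinearMap.mul_apply, ContinuousLinearMap.smul_apply,
      ContinuousLinearMap.sub_apply, ContinuousLinearMap.one_apply, hP k]
    match k with
    | 0 =>
      simp [hT0]
    | (m+1) =>
      rw [hT m, map_smul, hR' m,
        show e (m+1) - ((q ^ (4*(m+1)) : ℝ):ℂ) • e (m+1)
          = ((1 : ℂ) - ((q ^ (4*(m+1)) : ℝ):ℂ)) • e (m+1) by module,
        map_smul, hT' (m+1), smul_smul, smul_smul, smul_smul]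
      simp only [show m+1+1 = m+2 from rfl]
      congr 1
      norm_cast
      rw [Real.sqrt_mul (hne _)]
      field_simp
      linear_combination (q^2 * q^(2*m) * Real.sqrt (1 - q^(4*(m+2)))) *
        Real.mul_self_sqrt (hne (4*(m+1)))
end

section
/- The operators ρP, ρR satisfy the relations ρR ∘ ρR* = q¹² ρP² − q⁴(1+q⁴) ρP + 1 and ρR* ∘ ρR = q⁻⁴ ρP² − (1+q⁻⁴) ρP + 1, where * denotes the Hilbert-space adjoint and 1 the identity operator. -/
/-!
`ρR` is a weighted backward shift by two steps with weights
`w k = √((1 - q ^ (4 * (k + 2))) * (1 - q ^ (4 * (k + 1))))`, so `ρR ρR*` and `ρR* ρR` are diagonal in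
the basis `e`, with entry `w k ^ 2` at `e k`, resp. at `e (k + 2)`, and `0` at `e 0`, `e 1`.
With `x = q ^ (4 * k)` the eigenvalue of `ρP` at `e k`, `w k ^ 2 = (1 - q ^ 4 x) (1 - q ^ 8 x)` is the
first quadratic at `x`, and `q⁻⁴ (y - 1) (y - q ^ 4)` is the second one at `y = q ^ 8 x`; the latter
vanishes at the eigenvalues `1` and `q ^ 4` of `ρP` at `e 0` and `e 1`.
-/

open scoped InnerProductSpace

namespace HilbertBasis

variable {ι 𝕜 E : Type*} [RCLike 𝕜] [NormedAddCommGroup E] [InnerProductSpace 𝕜 E]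

theorem ext_inner (b : HilbertBasis ι 𝕜 E) {x y : E} (h : ∀ i, ⟪b i, x⟫_𝕜 = ⟪b i, y⟫_𝕜) :
    x = y :=
  b.repr.injective <| by ext i; rw [b.repr_apply_apply, b.repr_apply_apply, h i]

theorem ext_continuousLinearMap {F : Type*} [NormedAddCommGroup F] [NormedSpace 𝕜 F]
    (b : HilbertBasis ι 𝕜 E) {A B : E →L[𝕜] F} (h : ∀ i, A (b i) = B (b i)) : A = B :=
  ContinuousLinearMap.ext_on (Submodule.dense_iff_topologicalClosure_eq_top.mpr b.dense_span)
    (by rintro _ ⟨i, rfl⟩; exact h i)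

end HilbertBasis

structure IsWeightedBackwardShift {𝕜 E : Type*} [RCLike 𝕜] [NormedAddCommGroup E]
    [InnerProductSpace 𝕜 E] (e : HilbertBasis ℕ 𝕜 E) (n : ℕ) (c : ℕ → 𝕜) (A : E →L[𝕜] E) :
    Prop where
  apply_of_lt : ∀ i < n, A (e i) = 0
  apply_add : ∀ k, A (e (k + n)) = c k • e k

namespace IsWeightedBackwardShift

open ContinuousLinearMap

variable {𝕜 E : Type*} [RCLike 𝕜] [NormedAddCommGroup E] [InnerProductSpace 𝕜 E] [CompleteSpace E]
  {e : HilbertBasis ℕ 𝕜 E} {n : ℕ} {c : ℕ → 𝕜} {A : E →L[𝕜] E}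

theorem adjoint_apply (hA : IsWeightedBackwardShift e n c A) (k : ℕ) :
    adjoint A (e k) = starRingEnd 𝕜 (c k) • e (k + n) := by
  have horth := orthonormal_iff_ite.mp e.orthonormal
  refine e.ext_inner fun i => ?_
  rw [adjoint_inner_right, inner_smul_right]
  rcases lt_or_ge i n with hi | hi
  · simp [hA.apply_of_lt i hi, horth, (Nat.lt_of_lt_of_le hi (Nat.le_add_left n k)).ne]
  · obtain ⟨j, rfl⟩ := Nat.exists_eq_add_of_le' hi
    rw [hA.apply_add j, inner_smul_left]
    simp only [horth]
    by_cases hjk : j = k <;> simp [hjk]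

theorem mul_adjoint_apply (hA : IsWeightedBackwardShift e n c A) (k : ℕ) :
    (A * adjoint A) (e k) = (starRingEnd 𝕜 (c k) * c k) • e k := by
  rw [mul_apply_eq_comp, hA.adjoint_apply, map_smul, hA.apply_add, smul_smul]

theorem adjoint_mul_apply_add (hA : IsWeightedBackwardShift e n c A) (k : ℕ) :
    (adjoint A * A) (e (k + n)) = (starRingEnd 𝕜 (c k) * c k) • e (k + n) := by
  rw [mul_apply_eq_comp, hA.apply_add, map_smul, hA.adjoint_apply, smul_smul, mul_comm]

end IsWeightedBackwardShift

namespace ContinuousLinearMap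

theorem quadratic_apply_of_apply_eq_smul {R M : Type*} [CommRing R] [TopologicalSpace M]
    [AddCommGroup M] [Module R M] [ContinuousConstSMul R M] [IsTopologicalAddGroup M]
    {P : M →L[R] M} {x : M} {μ : R} (hx : P x = μ • x) (a b : R) :
    (a • P ^ 2 - b • P + 1 : M →L[R] M) x = (a * μ ^ 2 - b * μ + 1) • x := by
  simp only [add_apply, sub_apply, smul_apply, one_apply_eq_self, pow_two, mul_apply_eq_comp, hx,
    map_smul, smul_smul]
  module

end ContinuousLinearMap

open ContinuousLinearMap in
theorem stmt2_general {H : Type*} [NormedAddCommGroup H] [InnerProductSpace ℂ H] [CompleteSpace H]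
    (e : HilbertBasis ℕ ℂ H) (q : ℝ) (hq0 : 0 < q) (hq1 : q < 1)
    (ρP ρR : H →L[ℂ] H)
    (hP : ∀ k : ℕ, ρP (e k) = ((q ^ (4 * k) : ℝ) : ℂ) • e k)
    (hR0 : ρR (e 0) = 0) (hR1 : ρR (e 1) = 0)
    (hR : ∀ k : ℕ, ρR (e (k + 2)) =
      ((Real.sqrt ((1 - q ^ (4 * (k + 2))) * (1 - q ^ (4 * (k + 1)))) : ℝ) : ℂ) • e k) :
    ρR * adjoint ρR =
      ((q : ℂ) ^ 12) • ρP ^ 2 - ((q : ℂ) ^ 4 * (1 + (q : ℂ) ^ 4)) • ρP + 1 ∧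
    adjoint ρR * ρR =
      (((q : ℂ) ^ 4)⁻¹) • ρP ^ 2 - (1 + ((q : ℂ) ^ 4)⁻¹) • ρP + 1 := by
  set p : ℕ → ℝ := fun k => (1 - q ^ (4 * (k + 2))) * (1 - q ^ (4 * (k + 1)))
  have hshift : IsWeightedBackwardShift e 2 (fun k => ((√(p k) : ℝ) : ℂ)) ρR :=
    ⟨fun i hi => by interval_cases i <;> assumption, hR⟩
  have hweight (k : ℕ) : starRingEnd ℂ ((√(p k) : ℝ) : ℂ) * ((√(p k) : ℝ) : ℂ) = p k := by
    have hle (m : ℕ) : q ^ m ≤ 1 := pow_le_one₀ hq0.le hq1.le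
    rw [Complex.conj_ofReal, ← Complex.ofReal_mul,
      Real.mul_self_sqrt (mul_nonneg (sub_nonneg.2 (hle _)) (sub_nonneg.2 (hle _)))]
  have hq : (q : ℂ) ≠ 0 := Complex.ofReal_ne_zero.2 hq0.ne'
  refine ⟨e.ext_continuousLinearMap fun k => ?_, e.ext_continuousLinearMap fun k => ?_⟩
  · rw [hshift.mul_adjoint_apply, quadratic_apply_of_apply_eq_smul (hP k), hweight]
    congr 1
    simp only [p]
    push_cast
    ring
  · rw [quadratic_apply_of_apply_eq_smul (hP k)]
    obtain hk | ⟨j, rfl⟩ : k < 2 ∨ ∃ j, k = j + 2 := by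
      rcases lt_or_ge k 2 with hk | hk
      exacts [.inl hk, .inr (Nat.exists_eq_add_of_le' hk)]
    · rw [mul_apply_eq_comp, hshift.apply_of_lt k hk, map_zero]
      refine (smul_eq_zero_of_left ?_ _).symm
      interval_cases k <;> field_simp <;> push_cast <;> ring
    · rw [hshift.adjoint_mul_apply_add, hweight]
      congr 1
      simp only [p]
      field_simp
      push_cast
      ring

open ContinuousLinearMap in
/-- The operators `ρP, ρR` on `ℓ²(ℕ)` satisfy
`ρR ρR* = q¹² ρP² - q⁴(1+q⁴) ρP + 1` and `ρR* ρR = q⁻⁴ ρP² - (1+q⁻⁴) ρP + 1`. -/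
theorem stmt2 {H : Type*} [NormedAddCommGroup H] [InnerProductSpace ℂ H] [CompleteSpace H]
    (e : HilbertBasis ℕ ℂ H) (q : ℝ) (hq0 : 0 < q) (hq1 : q < 1)
    (ρP ρT ρR : H →L[ℂ] H)
    (hP : ∀ k : ℕ, ρP (e k) = ((q ^ (4 * k) : ℝ) : ℂ) • e k)
    (hT0 : ρT (e 0) = 0)
    (hT : ∀ k : ℕ, ρT (e (k + 1)) =
      ((q ^ (2 * k) * Real.sqrt (1 - q ^ (4 * (k + 1))) : ℝ) : ℂ) • e k)
    (hR0 : ρR (e 0) = 0) (hR1 : ρR (e 1) = 0)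
    (hR : ∀ k : ℕ, ρR (e (k + 2)) =
      ((Real.sqrt ((1 - q ^ (4 * (k + 2))) * (1 - q ^ (4 * (k + 1)))) : ℝ) : ℂ) • e k) :
    ρR * adjoint ρR =
      ((q : ℂ) ^ 12) • ρP ^ 2 - ((q : ℂ) ^ 4 * (1 + (q : ℂ) ^ 4)) • ρP + 1 ∧
    adjoint ρR * ρR =
      (((q : ℂ) ^ 4)⁻¹) • ρP ^ 2 - (1 + ((q : ℂ) ^ 4)⁻¹) • ρP + 1 :=
  stmt2_general e q hq0 hq1 ρP ρR hP hR0 hR1 hR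
end

section
/- Let q be a real number with 0 < q < 1 and let p, r, t ∈ ℂ. Then the following are equivalent: (a) p̄ = p, rp = q⁸pr, rt = q⁴tr, pt = q⁻⁴tp, t² = q²pr, r·t̄ = q²t(−q⁴p+1), r̄·t = q⁻²t̄(−p+1), r·r̄ = q¹²p² − q⁴(1+q⁴)p + 1, r̄·r = q⁻⁴p² − (1+q⁻⁴)p + 1, t·t̄ = −q⁴p² + p, and t̄·t = q⁻⁴(p − p²); (b) p = 0, t = 0, and |r| = 1. (Here z̄ denotes complex conjugation.) In other words, the one-dimensional *-representations of the quantum real projective plane algebra are exactly ρ_θ with ρ_θ(P) = ρ_θ(T) = 0 and ρ_θ(R) = e^{iθ}, θ ∈ [0,2π). -/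
/-!
In a one-dimensional representation all generators commute, so the relation `pt = q⁻⁴ tp`
with `q⁴ ≠ 1` forces `pt = 0`. If `p ≠ 0`, then `t = 0`, and the two expressions for `|t|²`
become `p - q⁴p² = 0` and `p - p² = 0`, i.e. `p = 1` and `q⁴ = 1`, which is impossible.
Hence `p = 0`, after which `|t|² = 0` and `|r|² = 1`.
-/

theorem mul_eq_zero_of_mul_eq_mul_mul_comm {R : Type*} [CommRing R] [NoZeroDivisors R]
    {c x y : R} (hc : c ≠ 1) (h : x * y = c * (y * x)) : x * y = 0 :=
  (mul_eq_zero.1 (by linear_combination h : (1 - c) * (x * y) = 0)).resolve_left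
    (sub_ne_zero.2 hc.symm)

namespace Complex

open ComplexConjugate

theorem mul_conj_eq_one_iff (z : ℂ) : z * conj z = 1 ↔ ‖z‖ = 1 := by
  rw [mul_conj', ← ofReal_pow, ofReal_eq_one,
    pow_eq_one_iff_of_nonneg (norm_nonneg z) two_ne_zero]

end Complex

open Complex in
/-- For `0 < q < 1` and complex numbers `p, r, t`, the defining relations of
the quantum real projective plane (with complex conjugation as the `*`-operation) hold if and
only if `p = 0`, `t = 0` and `|r| = 1`; i.e. the one-dimensional `*`-representations of
`O(ℝP²_q)` are exactly the `ρ_θ`. -/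
theorem stmt7 (q : ℝ) (hq0 : 0 < q) (hq1 : q < 1) (p r t : ℂ) :
    ((starRingEnd ℂ) p = p ∧
     r * p = (q : ℂ) ^ 8 * (p * r) ∧
     r * t = (q : ℂ) ^ 4 * (t * r) ∧
     p * t = ((q : ℂ) ^ 4)⁻¹ * (t * p) ∧
     t ^ 2 = (q : ℂ) ^ 2 * (p * r) ∧
     r * (starRingEnd ℂ) t = (q : ℂ) ^ 2 * (t * (-((q : ℂ) ^ 4) * p + 1)) ∧
     (starRingEnd ℂ) r * t = ((q : ℂ) ^ 2)⁻¹ * ((starRingEnd ℂ) t * (-p + 1)) ∧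
     r * (starRingEnd ℂ) r = (q : ℂ) ^ 12 * p ^ 2 - (q : ℂ) ^ 4 * (1 + (q : ℂ) ^ 4) * p + 1 ∧
     (starRingEnd ℂ) r * r = ((q : ℂ) ^ 4)⁻¹ * p ^ 2 - (1 + ((q : ℂ) ^ 4)⁻¹) * p + 1 ∧
     t * (starRingEnd ℂ) t = -((q : ℂ) ^ 4) * p ^ 2 + p ∧
     (starRingEnd ℂ) t * t = ((q : ℂ) ^ 4)⁻¹ * (p - p ^ 2))
    ↔ (p = 0 ∧ t = 0 ∧ ‖r‖ = 1) := by
  have hq4 : (q : ℂ) ^ 4 ≠ 1 := by exact_mod_cast (pow_lt_one₀ hq0.le hq1 four_ne_zero).ne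
  have hq4ne : (q : ℂ) ^ 4 ≠ 0 := pow_ne_zero _ (ofReal_ne_zero.2 hq0.ne')
  constructor
  · rintro ⟨-, -, -, hpt, -, -, -, hrr, -, htt, htt'⟩
    have hp : p = 0 := by
      by_contra hp
      have ht : t = 0 :=
        (mul_eq_zero.1 (mul_eq_zero_of_mul_eq_mul_mul_comm (inv_ne_one.2 hq4) hpt)).resolve_left hp
      subst ht
      have hp1 : p * (1 - p) = 0 := by
        linear_combination -(q : ℂ) ^ 4 * htt' - (p - p ^ 2) * mul_inv_cancel₀ hq4ne
      obtain rfl : p = 1 := (sub_eq_zero.1 ((mul_eq_zero.1 hp1).resolve_left hp)).symm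
      exact hq4 (by linear_combination htt)
    subst hp
    exact ⟨rfl, by simpa using htt, (mul_conj_eq_one_iff r).1 (by simpa using hrr)⟩
  · rintro ⟨rfl, rfl, hr⟩
    have hrr := (mul_conj_eq_one_iff r).2 hr
    exact ⟨by simp, by ring, by ring, by ring, by ring, by simp, by simp, by simp [hrr],
      by simp [mul_comm, hrr], by ring, by simp⟩
end

section
/- Let A be a unital C*-algebra, let q be a real number with 0 < q < 1, and let p, t ∈ A satisfy p* = p and t*·t = q⁻⁴(p − p²). Then the spectrum of p is contained in the real interval [0,1]; in particular ‖p‖ ≤ 1. -/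
/-!
With `s = q² t` the hypothesis reads `p - p² = s* s`, so `p - p²` has nonnegative spectrum. By
spectral mapping every `λ ∈ σ(p)` then satisfies `λ - λ² ≥ 0`, i.e. `λ ∈ [0, 1]`; since `p` is
self-adjoint, its spectrum is real and `±‖p‖` lies in it.
-/

open Set

theorem spectrum_subset_Icc_of_spectrum_sub_mul_self_nonneg {R A : Type*} [Field R]
    [LinearOrder R] [IsStrictOrderedRing R] [Ring A] [Algebra R A] {a : A}
    (h : ∀ x ∈ spectrum R (a - a * a), 0 ≤ x) : spectrum R a ⊆ Icc 0 1 := by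
  intro x hx
  have hmap : x - x * x ∈ spectrum R (a - a * a) := by
    have := spectrum.subset_polynomial_aeval a (Polynomial.X - Polynomial.X * Polynomial.X)
      ⟨x, hx, rfl⟩
    simpa using this
  have := h _ hmap
  constructor <;> nlinarith

theorem IsSelfAdjoint.norm_le_one_of_spectrum_subset_Icc {A : Type*} [CStarAlgebra A] {a : A}
    (ha : IsSelfAdjoint a) (h : spectrum ℝ a ⊆ Icc (-1) 1) : ‖a‖ ≤ 1 := by
  nontriviality A
  rcases CStarAlgebra.norm_or_neg_norm_mem_spectrum ha with hmem | hmem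
  · exact (h hmem).2
  · simpa using (h hmem).1

theorem stmt8_general {A : Type*} [NormedRing A] [StarRing A] [CStarRing A] [CompleteSpace A]
    [NormedAlgebra ℂ A] [StarModule ℂ A] (q : ℝ) (hq0 : 0 < q)
    (p t : A) (hp : star p = p)
    (ht : star t * t = (((q : ℂ) ^ 4)⁻¹) • (p - p * p)) :
    spectrum ℂ p ⊆ Complex.ofReal '' Set.Icc (0 : ℝ) 1 ∧ ‖p‖ ≤ 1 := by
  let _ : CStarAlgebra A := {}
  have hq : (q : ℂ) ≠ 0 := by exact_mod_cast hq0.ne'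
  have hsq : p - p * p = star ((q : ℂ) ^ 2 • t) * ((q : ℂ) ^ 2 • t) := by
    rw [star_smul, smul_mul_smul_comm, ht, smul_smul, star_pow, Complex.star_def,
      Complex.conj_ofReal, ← pow_add, mul_inv_cancel₀ (pow_ne_zero 4 hq), one_smul]
  have hσ : spectrum ℝ p ⊆ Icc 0 1 :=
    spectrum_subset_Icc_of_spectrum_sub_mul_self_nonneg (hsq ▸ spectrum_star_mul_self_nonneg)
  refine ⟨?_, IsSelfAdjoint.norm_le_one_of_spectrum_subset_Icc hp
    (hσ.trans (Icc_subset_Icc (by norm_num) le_rfl))⟩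
  rw [← (IsSelfAdjoint.spectrumRestricts hp).algebraMap_image]
  exact image_mono hσ

/-- In a unital C*-algebra, if `p* = p` and `t* t = q⁻⁴ (p - p²)` for some
`0 < q < 1`, then the spectrum of `p` is contained in the real interval `[0,1]`; in particular
`‖p‖ ≤ 1`. -/
theorem stmt8 {A : Type*} [NormedRing A] [StarRing A] [CStarRing A] [CompleteSpace A]
    [NormedAlgebra ℂ A] [StarModule ℂ A] (q : ℝ) (hq0 : 0 < q) (hq1 : q < 1)
    (p t : A) (hp : star p = p)
    (ht : star t * t = (((q : ℂ) ^ 4)⁻¹) • (p - p * p)) :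
    spectrum ℂ p ⊆ Complex.ofReal '' Set.Icc (0 : ℝ) 1 ∧ ‖p‖ ≤ 1 :=
  stmt8_general q hq0 p t hp ht
end

section
/- Let A be a unital C*-algebra, let q be a real number with 0 < q < 1, and let p, r, t ∈ A satisfy p* = p, t*·t = q⁻⁴(p − p²), and r*·r = q⁻⁴p² − (1+q⁻⁴)p + 1. Then ‖t‖ ≤ q⁻²/2 and ‖r‖² ≤ 2(1 + q⁻⁴). -/
/-!
Since `p - p² = (q² t)* (q² t)` is positive, the continuous functional calculus places the
spectrum of the self-adjoint element `p` in `[0, 1]`. Hence `‖p‖ ≤ 1` and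
`‖p - p²‖ ≤ max_{[0,1]} (x - x²) = 1/4`. The C*-identity `‖x‖² = ‖x* x‖` then gives
`‖t‖² ≤ q⁻⁴/4`, and bounds `‖r‖²` by the triangle inequality.
-/

open Set

section

variable {A : Type*} [CStarAlgebra A] {p : A}

lemma IsSelfAdjoint.spectrum_subset_Icc_of_nonneg_sub_mul_self [PartialOrder A]
    [StarOrderedRing A] (hp : IsSelfAdjoint p) (h : 0 ≤ p - p * p) :
    spectrum ℝ p ⊆ Icc 0 1 := by
  have hcfc : cfc (fun x : ℝ ↦ x - x * x) p = p - p * p := by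
    rw [cfc_sub _ _ p, cfc_mul _ _ p, cfc_id' ℝ p]
  intro x hx
  have hx' : x - x * x ∈ spectrum ℝ (p - p * p) := by
    rw [← hcfc, cfc_map_spectrum (fun x : ℝ ↦ x - x * x) p]
    exact ⟨x, hx, rfl⟩
  have := (StarOrderedRing.nonneg_iff_spectrum_nonneg (R := ℝ) _ h.isSelfAdjoint).mp h _ hx'
  constructor <;> nlinarith

lemma IsSelfAdjoint.norm_le_one_of_spectrum_subset_Icc_s9 (hp : IsSelfAdjoint p)
    (hσ : spectrum ℝ p ⊆ Icc 0 1) : ‖p‖ ≤ 1 := by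
  rw [← cfc_id' ℝ p]
  refine norm_cfc_le zero_le_one fun x hx ↦ ?_
  obtain ⟨h0, h1⟩ := hσ hx
  exact (Real.norm_of_nonneg h0).trans_le h1

lemma IsSelfAdjoint.norm_sub_mul_self_le_of_spectrum_subset_Icc (hp : IsSelfAdjoint p)
    (hσ : spectrum ℝ p ⊆ Icc 0 1) : ‖p - p * p‖ ≤ 1 / 4 := by
  rw [← cfc_id' ℝ p, ← cfc_mul _ _ p, ← cfc_sub _ _ p]
  refine norm_cfc_le (by norm_num) fun x hx ↦ ?_
  obtain ⟨h0, h1⟩ := hσ hx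
  rw [Real.norm_of_nonneg (by nlinarith)]
  nlinarith [sq_nonneg (x - 1 / 2)]

lemma norm_sq_le_of_star_mul_self_eq_smul_sub_mul_self {t : A} (hp : IsSelfAdjoint p)
    (hσ : spectrum ℝ p ⊆ Icc 0 1) {c : ℝ} (hc : 0 ≤ c)
    (ht : star t * t = (c : ℂ) • (p - p * p)) : ‖t‖ ^ 2 ≤ c / 4 := calc
  ‖t‖ ^ 2 = c * ‖p - p * p‖ := by
    rw [sq, ← CStarRing.norm_star_mul_self, ht, norm_smul, Complex.norm_real,
      Real.norm_of_nonneg hc]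
  _ ≤ c * (1 / 4) := by gcongr; exact hp.norm_sub_mul_self_le_of_spectrum_subset_Icc hσ
  _ = c / 4 := by ring

lemma norm_sq_le_of_star_mul_self_eq_smul_mul_self_sub_smul_add_one {r : A} (hp : ‖p‖ ≤ 1)
    {c : ℝ} (hc : 0 ≤ c) (hr : star r * r = (c : ℂ) • (p * p) - (1 + (c : ℂ)) • p + 1) :
    ‖r‖ ^ 2 ≤ 2 * (1 + c) := calc
  ‖r‖ ^ 2 = ‖(c : ℂ) • (p * p) - (1 + (c : ℂ)) • p + 1‖ := by
    rw [sq, ← CStarRing.norm_star_mul_self, hr]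
  _ ≤ ‖(c : ℂ) • (p * p)‖ + ‖(1 + (c : ℂ)) • p‖ + ‖(1 : A)‖ :=
    norm_add_le_of_le (norm_sub_le _ _) le_rfl
  _ = c * ‖p * p‖ + (1 + c) * ‖p‖ + ‖(1 : A)‖ := by
    rw [norm_smul, norm_smul, Complex.norm_real, Real.norm_of_nonneg hc, ← Complex.ofReal_one,
      ← Complex.ofReal_add, Complex.norm_real, Real.norm_of_nonneg (by positivity)]
  _ ≤ c * 1 + (1 + c) * 1 + 1 := by
    gcongr
    · exact (norm_mul_le p p).trans (by nlinarith [norm_nonneg p])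
    · obtain _ | _ := subsingleton_or_nontrivial A
      · simp [Subsingleton.elim (1 : A) 0]
      · exact norm_one.le
  _ = 2 * (1 + c) := by ring

end

theorem stmt9_general {A : Type*} [NormedRing A] [StarRing A] [CStarRing A] [CompleteSpace A]
    [NormedAlgebra ℂ A] [StarModule ℂ A] (q : ℝ) (hq0 : 0 < q)
    (p r t : A) (hp : star p = p)
    (ht : star t * t = (((q : ℂ) ^ 4)⁻¹) • (p - p * p))
    (hr : star r * r =
      (((q : ℂ) ^ 4)⁻¹) • (p * p) - (1 + ((q : ℂ) ^ 4)⁻¹) • p + 1) :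
    ‖t‖ ≤ (q ^ 2)⁻¹ / 2 ∧ ‖r‖ ^ 2 ≤ 2 * (1 + (q ^ 4)⁻¹) := by
  let : CStarAlgebra A := {}
  let := CStarAlgebra.spectralOrder A
  have := CStarAlgebra.spectralOrderedRing A
  set c : ℝ := (q ^ 4)⁻¹ with hc
  have hc0 : 0 ≤ c := by positivity
  have hcC : ((q : ℂ) ^ 4)⁻¹ = (c : ℂ) := by push_cast [hc]; rfl
  rw [hcC] at ht hr
  have hpsa : IsSelfAdjoint p := hp
  have hst : p - p * p = star ((q ^ 2 : ℝ) • t) * ((q ^ 2 : ℝ) • t) := by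
    rw [star_smul, star_trivial, smul_mul_smul_comm, ht, ← Complex.coe_smul, smul_smul,
      ← Complex.ofReal_mul, hc, show q ^ 2 * q ^ 2 * (q ^ 4)⁻¹ = (1 : ℝ) by field_simp,
      Complex.ofReal_one, one_smul]
  have hσ := hpsa.spectrum_subset_Icc_of_nonneg_sub_mul_self (hst ▸ star_mul_self_nonneg _)
  refine ⟨?_, norm_sq_le_of_star_mul_self_eq_smul_mul_self_sub_smul_add_one
    (hpsa.norm_le_one_of_spectrum_subset_Icc_s9 hσ) hc0 hr⟩
  have htc := norm_sq_le_of_star_mul_self_eq_smul_sub_mul_self hpsa hσ hc0 ht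
  rw [show c / 4 = ((q ^ 2)⁻¹ / 2) ^ 2 by rw [hc]; ring] at htc
  exact (pow_le_pow_iff_left₀ (norm_nonneg t) (by positivity) two_ne_zero).mp htc

/-- In a unital C*-algebra, if `p* = p`, `t* t = q⁻⁴ (p - p²)` and
`r* r = q⁻⁴ p² - (1 + q⁻⁴) p + 1` for some `0 < q < 1`, then `‖t‖ ≤ q⁻²/2` and
`‖r‖² ≤ 2 (1 + q⁻⁴)`. -/
theorem stmt9 {A : Type*} [NormedRing A] [StarRing A] [CStarRing A] [CompleteSpace A]
    [NormedAlgebra ℂ A] [StarModule ℂ A] (q : ℝ) (hq0 : 0 < q) (hq1 : q < 1)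
    (p r t : A) (hp : star p = p)
    (ht : star t * t = (((q : ℂ) ^ 4)⁻¹) • (p - p * p))
    (hr : star r * r =
      (((q : ℂ) ^ 4)⁻¹) • (p * p) - (1 + ((q : ℂ) ^ 4)⁻¹) • p + 1) :
    ‖t‖ ≤ (q ^ 2)⁻¹ / 2 ∧ ‖r‖ ^ 2 ≤ 2 * (1 + (q ^ 4)⁻¹) :=
  stmt9_general q hq0 p r t hp ht hr
end

section
/- The family of bounded operators on ℓ²(ℕ) consisting of all ρP^k ∘ ρR^l for k,l ∈ ℕ, all ρP^k ∘ (ρR*)^l for k ∈ ℕ and l ∈ ℕ \ {0}, all ρP^k ∘ ρR^l ∘ ρT for k,l ∈ ℕ, and all ρP^k ∘ (ρR*)^l ∘ ρT* for k,l ∈ ℕ, is linearly independent over ℂ. -/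
/-!
Each operator of the family is `ρP ^ k` times a weighted shift with nonzero weights: `ρR`, `ρT`
lower the index by 2 and 1, their adjoints raise it, and distinct shift parts `W j` have distinct
degrees `target - source ∈ ℤ`. Since
`ρP (e n) = q ^ (4 n) • e n`, the matrix coefficient `⟪e (m + b), · (e (m + a))⟫` of a vanishing
combination `∑ g (k, j) • ρP ^ k * W j` reads `c m * p (q ^ (4 (m + b))) = 0`, where `p` is the
polynomial `∑ₖ g (k, j) X ^ k` of one degree and `c m ≠ 0` the weight. So `p` has infinitely
many roots and vanishes.
-/

open ContinuousLinearMap Polynomial Function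

section WeightedShift

variable {R M : Type*} [Semiring R] [TopologicalSpace M] [AddCommMonoid M] [Module R M]

def IsWeightedShift (e : ℕ → M) (a b : ℕ) (A : M →L[R] M) : Prop :=
  ∀ n, ∃ c : R, c ≠ 0 ∧ A (e (n + a)) = c • e (n + b)

variable {e : ℕ → M}

theorem isWeightedShift_one [Nontrivial R] : IsWeightedShift e 0 0 (1 : M →L[R] M) :=
  fun n => ⟨1, one_ne_zero, by simp⟩

theorem IsWeightedShift.mul [NoZeroDivisors R] {a b a' b' : ℕ} {A B : M →L[R] M}
    (hA : IsWeightedShift e a b A) (hB : IsWeightedShift e a' b' B) :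
    IsWeightedShift e (a + a') (b + b') (A * B) := by
  intro n
  obtain ⟨c, hc, hBn⟩ := hB (n + a)
  obtain ⟨c', hc', hAn⟩ := hA (n + b')
  refine ⟨c * c', mul_ne_zero hc hc', ?_⟩
  rw [mul_apply_eq_comp, ← add_assoc, hBn, map_smul, add_right_comm, hAn, smul_smul,
    add_assoc, add_comm b']

theorem IsWeightedShift.pow [Nontrivial R] [NoZeroDivisors R] {a b : ℕ} {A : M →L[R] M}
    (hA : IsWeightedShift e a b A) (l : ℕ) : IsWeightedShift e (l * a) (l * b) (A ^ l) := by
  induction l with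
  | zero => simpa using isWeightedShift_one
  | succ l ih => simpa [pow_succ, add_mul] using ih.mul hA

end WeightedShift

section Independence

variable {𝕜 E : Type*} [RCLike 𝕜] [NormedAddCommGroup E] [InnerProductSpace 𝕜 E]
  {e : ℕ → E} {D : E →L[𝕜] E} {μ : ℕ → 𝕜}

theorem pow_apply_of_apply_eq_smul (hD : ∀ n, D (e n) = μ n • e n) (k n : ℕ) :
    (D ^ k) (e n) = μ n ^ k • e n := by
  induction k with
  | zero => simp
  | succ k ih => rw [pow_succ', mul_apply_eq_comp, ih, map_smul, hD, smul_smul, ← pow_succ]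

theorem inner_pow_mul_apply_of_apply_eq_smul (he : Orthonormal 𝕜 e)
    (hD : ∀ n, D (e n) = μ n • e n) {W : E →L[𝕜] E} {c : 𝕜} {x y : ℕ}
    (hW : W (e x) = c • e y) (k m : ℕ) :
    inner 𝕜 (e m) ((D ^ k * W) (e x)) = if m = y then c * μ y ^ k else 0 := by
  classical
  rw [mul_apply_eq_comp, hW, map_smul, pow_apply_of_apply_eq_smul hD, smul_smul, inner_smul_right,
    orthonormal_iff_ite.mp he]
  split_ifs <;> ring

theorem linearIndependent_pow_mul_of_isWeightedShift {J : Type*} (he : Orthonormal 𝕜 e)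
    (hμ : Injective μ) (hD : ∀ n, D (e n) = μ n • e n) {a b : J → ℕ} {W : J → E →L[𝕜] E}
    (hW : ∀ j, IsWeightedShift e (a j) (b j) (W j))
    (hab : Injective fun j => (b j : ℤ) - a j) :
    LinearIndependent 𝕜 fun p : ℕ × J => D ^ p.1 * W p.2 := by
  classical
  choose c hc0 hc using hW
  rw [linearIndependent_iff']
  rintro s g hg ⟨k₀, j₀⟩ hmem
  let p : 𝕜[X] := ∑ i ∈ s with i.2 = j₀, monomial i.1 (g i)
  let A := s.sup fun i => a i.2
  -- `A` bounds every source offset in `s`, so every `W j` acts on `e (A + t + a j₀)` by its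
  -- shift formula.
  have hroot : ∀ t, p.IsRoot (μ (A + t + b j₀)) := by
    intro t
    have hcoeff : ∀ i ∈ s,
        g i * inner 𝕜 (e (A + t + b j₀)) ((D ^ i.1 * W i.2) (e (A + t + a j₀))) =
          if i.2 = j₀ then c j₀ (A + t) * (g i * μ (A + t + b j₀) ^ i.1) else 0 := by
      rintro ⟨k, j⟩ hi
      have ha : a j ≤ A := Finset.le_sup (f := fun i => a i.2) hi
      have hsrc : A + t + a j₀ = (A + t + a j₀ - a j) + a j := by omega
      rw [hsrc, inner_pow_mul_apply_of_apply_eq_smul he hD (hc j _)]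
      by_cases hj : j = j₀
      · subst hj
        simp only [Nat.add_sub_cancel, if_true]
        ring
      · have htgt : A + t + b j₀ ≠ A + t + a j₀ - a j + b j :=
          fun h => hj (hab (by simp only; omega))
        simp [hj, htgt]
    have hsum :=
      congrArg (fun T : E →L[𝕜] E => inner 𝕜 (e (A + t + b j₀)) (T (e (A + t + a j₀)))) hg
    simp only [sum_apply, smul_apply, inner_sum, inner_smul_right, zero_apply,
      inner_zero_right] at hsum
    rw [Finset.sum_congr rfl hcoeff, ← Finset.sum_filter, ← Finset.mul_sum] at hsum
    have heval :
        p.eval (μ (A + t + b j₀)) = ∑ i ∈ s with i.2 = j₀, g i * μ (A + t + b j₀) ^ i.1 := by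
      simp [p, eval_finsetSum]
    rw [IsRoot, heval]
    exact (mul_eq_zero.mp hsum).resolve_left (hc0 _ _)
  have hp : p = 0 := p.eq_zero_of_infinite_isRoot <|
    Set.infinite_of_injective_forall_mem (hμ.comp fun t t' h => by omega) hroot
  have hp_coeff : p.coeff k₀ = g (k₀, j₀) := by
    rw [finsetSum_coeff, Finset.sum_eq_single_of_mem (k₀, j₀) (by simp [hmem])]
    · simp
    · rintro ⟨k, j⟩ hi hne
      simp only [Finset.mem_filter] at hi
      rw [coeff_monomial, if_neg]
      rintro rfl
      exact hne (by rw [hi.2])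
  rw [← hp_coeff, hp, coeff_zero]

end Independence

section Adjoint

variable {𝕜 E : Type*} [RCLike 𝕜] [NormedAddCommGroup E] [InnerProductSpace 𝕜 E]
  [CompleteSpace E] (e : HilbertBasis ℕ 𝕜 E) {A : E →L[𝕜] E} {a : ℕ} {c : ℕ → 𝕜}

theorem adjoint_apply_of_apply_add_eq_smul (hA : ∀ n, A (e (n + a)) = c n • e n)
    (hA₀ : ∀ n < a, A (e n) = 0) (n : ℕ) :
    adjoint A (e n) = (starRingEnd 𝕜) (c n) • e (n + a) := by
  classical
  apply e.repr.injective
  ext m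
  rw [e.repr_apply_apply, e.repr_apply_apply, adjoint_inner_right, inner_smul_right,
    orthonormal_iff_ite.mp e.orthonormal]
  obtain hm | ⟨m, rfl⟩ : m < a ∨ ∃ m', m = m' + a := by
    rcases lt_or_ge m a with hm | hm
    exacts [.inl hm, .inr ⟨m - a, by omega⟩]
  · rw [hA₀ m hm, inner_zero_left, if_neg (by omega), mul_zero]
  · rw [hA, inner_smul_left, orthonormal_iff_ite.mp e.orthonormal]
    by_cases h : m = n
    · simp [h]
    · simp [h]

theorem isWeightedShift_adjoint_of_apply_add_eq_smul (hc : ∀ n, c n ≠ 0)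
    (hA : ∀ n, A (e (n + a)) = c n • e n) (hA₀ : ∀ n < a, A (e n) = 0) :
    IsWeightedShift e 0 a (adjoint A) :=
  fun n => ⟨_, by simpa using hc n, adjoint_apply_of_apply_add_eq_smul e hA hA₀ n⟩

end Adjoint

section Family

variable {H : Type*} [NormedAddCommGroup H] [InnerProductSpace ℂ H] [CompleteSpace H]

noncomputable def shiftFactor (ρT ρR : H →L[ℂ] H) : ℕ ⊕ ℕ ⊕ ℕ ⊕ ℕ → H →L[ℂ] H
  | .inl l => ρR ^ l
  | .inr (.inl l) => adjoint ρR ^ (l + 1)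
  | .inr (.inr (.inl l)) => ρR ^ l * ρT
  | .inr (.inr (.inr l)) => adjoint ρR ^ l * adjoint ρT

def shiftSource : ℕ ⊕ ℕ ⊕ ℕ ⊕ ℕ → ℕ
  | .inl l => 2 * l
  | .inr (.inl _) => 0
  | .inr (.inr (.inl l)) => 2 * l + 1
  | .inr (.inr (.inr _)) => 0

def shiftTarget : ℕ ⊕ ℕ ⊕ ℕ ⊕ ℕ → ℕ
  | .inl _ => 0
  | .inr (.inl l) => 2 * l + 2
  | .inr (.inr (.inl _)) => 0
  | .inr (.inr (.inr l)) => 2 * l + 1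

theorem injective_shiftTarget_sub_shiftSource :
    Injective fun j => (shiftTarget j : ℤ) - shiftSource j := by
  rintro (l | l | l | l) (l' | l' | l' | l') h <;>
    simp only [shiftTarget, shiftSource, Sum.inl.injEq, Sum.inr.injEq, reduceCtorEq] at h ⊢ <;>
    omega

theorem isWeightedShift_shiftFactor {e : ℕ → H} {ρT ρR : H →L[ℂ] H}
    (hR : IsWeightedShift e 2 0 ρR) (hR' : IsWeightedShift e 0 2 (adjoint ρR))
    (hT : IsWeightedShift e 1 0 ρT) (hT' : IsWeightedShift e 0 1 (adjoint ρT))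
    (j : ℕ ⊕ ℕ ⊕ ℕ ⊕ ℕ) :
    IsWeightedShift e (shiftSource j) (shiftTarget j) (shiftFactor ρT ρR j) := by
  rcases j with l | l | l | l
  · simpa [shiftSource, shiftTarget, shiftFactor, mul_comm] using hR.pow l
  · simpa [shiftSource, shiftTarget, shiftFactor, mul_comm, add_mul] using hR'.pow (l + 1)
  · simpa [shiftSource, shiftTarget, shiftFactor, mul_comm] using (hR.pow l).mul hT
  · simpa [shiftSource, shiftTarget, shiftFactor, mul_comm] using (hR'.pow l).mul hT'

def splitDiagonalExponent : (ℕ × ℕ) ⊕ (ℕ × ℕ) ⊕ (ℕ × ℕ) ⊕ (ℕ × ℕ) → ℕ × (ℕ ⊕ ℕ ⊕ ℕ ⊕ ℕ)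
  | .inl p => (p.1, .inl p.2)
  | .inr (.inl p) => (p.1, .inr (.inl p.2))
  | .inr (.inr (.inl p)) => (p.1, .inr (.inr (.inl p.2)))
  | .inr (.inr (.inr p)) => (p.1, .inr (.inr (.inr p.2)))

theorem injective_splitDiagonalExponent : Injective splitDiagonalExponent := by
  rintro (⟨k, l⟩ | ⟨k, l⟩ | ⟨k, l⟩ | ⟨k, l⟩) (⟨k', l'⟩ | ⟨k', l'⟩ | ⟨k', l'⟩ | ⟨k', l'⟩) h <;>
    simp_all [splitDiagonalExponent]

end Family

open ContinuousLinearMap in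
/-- The family of bounded operators on `ℓ²(ℕ)` consisting of
`ρP^k ρR^l` (`k,l ∈ ℕ`), `ρP^k (ρR*)^l` (`k ∈ ℕ`, `l ≥ 1`), `ρP^k ρR^l ρT` (`k,l ∈ ℕ`) and
`ρP^k (ρR*)^l ρT*` (`k,l ∈ ℕ`) is linearly independent over `ℂ`. -/
theorem stmt10 {H : Type*} [NormedAddCommGroup H] [InnerProductSpace ℂ H] [CompleteSpace H]
    (e : HilbertBasis ℕ ℂ H) (q : ℝ) (hq0 : 0 < q) (hq1 : q < 1)
    (ρP ρT ρR : H →L[ℂ] H)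
    (hP : ∀ k : ℕ, ρP (e k) = ((q ^ (4 * k) : ℝ) : ℂ) • e k)
    (hT0 : ρT (e 0) = 0)
    (hT : ∀ k : ℕ, ρT (e (k + 1)) =
      ((q ^ (2 * k) * Real.sqrt (1 - q ^ (4 * (k + 1))) : ℝ) : ℂ) • e k)
    (hR0 : ρR (e 0) = 0) (hR1 : ρR (e 1) = 0)
    (hR : ∀ k : ℕ, ρR (e (k + 2)) =
      ((Real.sqrt ((1 - q ^ (4 * (k + 2))) * (1 - q ^ (4 * (k + 1)))) : ℝ) : ℂ) • e k) :
    LinearIndependent ℂ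
      (fun i : (ℕ × ℕ) ⊕ ((ℕ × ℕ) ⊕ ((ℕ × ℕ) ⊕ (ℕ × ℕ))) =>
        match i with
        | Sum.inl (k, l) => ρP ^ k * ρR ^ l
        | Sum.inr (Sum.inl (k, l)) => ρP ^ k * (adjoint ρR) ^ (l + 1)
        | Sum.inr (Sum.inr (Sum.inl (k, l))) => ρP ^ k * ρR ^ l * ρT
        | Sum.inr (Sum.inr (Sum.inr (k, l))) => ρP ^ k * (adjoint ρR) ^ l * adjoint ρT) := by
  have h_one_sub : ∀ m ≠ 0, 0 < 1 - q ^ m := fun m hm => sub_pos.mpr (pow_lt_one₀ hq0.le hq1 hm)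
  have hRc (k : ℕ) :
      ((Real.sqrt ((1 - q ^ (4 * (k + 2))) * (1 - q ^ (4 * (k + 1)))) : ℝ) : ℂ) ≠ 0 :=
    Complex.ofReal_ne_zero.mpr (Real.sqrt_pos.mpr
      (mul_pos (h_one_sub _ (by omega)) (h_one_sub _ (by omega)))).ne'
  have hTc (k : ℕ) : ((q ^ (2 * k) * Real.sqrt (1 - q ^ (4 * (k + 1))) : ℝ) : ℂ) ≠ 0 :=
    Complex.ofReal_ne_zero.mpr
      (mul_pos (pow_pos hq0 _) (Real.sqrt_pos.mpr (h_one_sub _ (by omega)))).ne'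
  have hR₀ : ∀ n < 2, ρR (e n) = 0 := by
    intro n hn
    interval_cases n
    exacts [hR0, hR1]
  have hT₀ : ∀ n < 1, ρT (e n) = 0 := by
    intro n hn
    obtain rfl : n = 0 := by omega
    exact hT0
  have hμ : Injective fun n : ℕ => ((q ^ (4 * n) : ℝ) : ℂ) :=
    Complex.ofReal_injective.comp <| (pow_right_injective₀ hq0 hq1.ne).comp fun m n h => by omega
  have hshift := isWeightedShift_shiftFactor (fun n => ⟨_, hRc n, hR n⟩)
    (isWeightedShift_adjoint_of_apply_add_eq_smul e hRc hR hR₀)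
    (fun n => ⟨_, hTc n, hT n⟩) (isWeightedShift_adjoint_of_apply_add_eq_smul e hTc hT hT₀)
  have hfamily := (linearIndependent_pow_mul_of_isWeightedShift e.orthonormal hμ hP hshift
    injective_shiftTarget_sub_shiftSource).comp _ injective_splitDiagonalExponent
  convert hfamily using 1
  · funext i
    rcases i with ⟨k, l⟩ | ⟨k, l⟩ | ⟨k, l⟩ | ⟨k, l⟩ <;>
      simp [splitDiagonalExponent, shiftFactor, mul_assoc]
  -- the two `Semiring ℂ` instances (direct, and through `RCLike ℂ`) agree only up to unfolding
  · rfl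
end

section
/- Let q be a real number with 0 < q < 1 and let O(S²_{q,1}) be the quotient of the free unital ℂ-algebra on generators K, L, L′ by the two-sided ideal generated by LK − q²KL, KL′ − q²L′K, L′L + K² − 1, LL′ + q⁴K² − 1. Then the assignment K ↦ −K, L ↦ −L, L′ ↦ −L′ extends to a well-defined ℂ-algebra automorphism r₂ of O(S²_{q,1}) with r₂ ∘ r₂ = id, and the fixed-point subalgebra {a ∈ O(S²_{q,1}) : r₂(a) = a} equals the unital subalgebra generated by the elements K², L², KL, (L′)², and L′K. -/
/-
The assignment negating the three generators is well defined on `O(S²_{q,1})` because every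
defining relation is homogeneous of even degree. For an algebra generated by a set `X` and an
endomorphism `σ` with `σ x = -x` on `X`, every monomial in `X` is either a product of elements
of `X * X`, hence fixed by `σ`, or such a product times one generator, hence negated by `σ`. So
`a + σ a` always lies in the subalgebra generated by `X * X`, which is therefore the fixed-point
algebra of `σ` once `2` is invertible. For `X = {K, L, L′}` the relations express the four
remaining products `LK, KL′, LL′, L′L` through `K², KL, L′K`.
-/

namespace PodlesSphere

/-- Generator `K` of `O(S²_{q,1})` in the free algebra on three generators. -/
noncomputable def K : FreeAlgebra ℂ (Fin 3) := FreeAlgebra.ι ℂ 0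
/-- Generator `L` of `O(S²_{q,1})`. -/
noncomputable def L : FreeAlgebra ℂ (Fin 3) := FreeAlgebra.ι ℂ 1
/-- Generator `L′ = L*` of `O(S²_{q,1})`. -/
noncomputable def L' : FreeAlgebra ℂ (Fin 3) := FreeAlgebra.ι ℂ 2

/-- The defining relations of the coordinate algebra `O(S²_{q,1})` of the equator Podleś
quantum sphere, on generators `K, L, L′` (with `L′` playing the role of `L*`):
`LK = q²KL`, `KL′ = q²L′K`, `L′L + K² = 1`, `LL′ + q⁴K² = 1`. -/
inductive Rel (q : ℝ) : FreeAlgebra ℂ (Fin 3) → FreeAlgebra ℂ (Fin 3) → Prop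
  | rel1 : Rel q (L * K) (((q : ℂ) ^ 2) • (K * L))
  | rel2 : Rel q (K * L') (((q : ℂ) ^ 2) • (L' * K))
  | rel3 : Rel q (L' * L + K * K) 1
  | rel4 : Rel q (L * L' + ((q : ℂ) ^ 4) • (K * K)) 1

end PodlesSphere

namespace Algebra

open Pointwise

variable {R A : Type*} [CommRing R] [Ring A] [Algebra R A] {X : Set A}

theorem mem_adjoin_mul_self_or_exists_mul_of_mem_closure {m : A}
    (hm : m ∈ Submonoid.closure X) :
    m ∈ adjoin R (X * X) ∨ ∃ b ∈ adjoin R (X * X), ∃ x ∈ X, m = b * x := by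
  induction hm using Submonoid.closure_induction_right with
  | one => exact .inl (one_mem _)
  | mul_right m _ y hy ih =>
    rcases ih with hm | ⟨b, hb, x, hx, rfl⟩
    · exact .inr ⟨m, hm, y, hy, rfl⟩
    · rw [mul_assoc]
      exact .inl (mul_mem hb (subset_adjoin (Set.mul_mem_mul hx hy)))

variable (σ : A →ₐ[R] A)

theorem apply_eq_self_of_mem_adjoin_mul_self (hσ : ∀ x ∈ X, σ x = -x) {b : A}
    (hb : b ∈ adjoin R (X * X)) : σ b = b := by
  suffices adjoin R (X * X) ≤ AlgHom.equalizer σ (AlgHom.id R A) from this hb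
  refine adjoin_le ?_
  rintro _ ⟨x, hx, y, hy, rfl⟩
  simp [hσ x hx, hσ y hy]

theorem add_apply_mem_adjoin_mul_self (hσ : ∀ x ∈ X, σ x = -x) (hX : adjoin R X = ⊤) (a : A) :
    a + σ a ∈ adjoin R (X * X) := by
  have hspan : Submodule.span R (Submonoid.closure X) ≤
      (Subalgebra.toSubmodule (adjoin R (X * X))).comap (LinearMap.id + σ.toLinearMap) := by
    refine Submodule.span_le.mpr fun m hm ↦ ?_
    rcases mem_adjoin_mul_self_or_exists_mul_of_mem_closure (R := R) hm with
      hm | ⟨b, hb, x, hx, rfl⟩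
    · simpa [apply_eq_self_of_mem_adjoin_mul_self σ hσ hm] using add_mem hm hm
    · simp [apply_eq_self_of_mem_adjoin_mul_self σ hσ hb, hσ x hx]
  exact hspan (by rw [← adjoin_eq_span, hX]; trivial)

theorem setOf_apply_eq_self_eq_adjoin_mul_self [Invertible (2 : R)] (hσ : ∀ x ∈ X, σ x = -x)
    (hX : adjoin R X = ⊤) :
    {a | σ a = a} = adjoin R (X * X) := by
  ext a
  refine ⟨fun ha ↦ ?_, apply_eq_self_of_mem_adjoin_mul_self σ hσ⟩
  have h2a : (2 : R) • a ∈ adjoin R (X * X) := by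
    simpa [two_smul, ha.out] using add_apply_mem_adjoin_mul_self σ hσ hX a
  simpa [smul_smul] using Subalgebra.smul_mem _ h2a (⅟2 : R)

end Algebra

theorem RingQuot.adjoin_range_mkAlgHom_ι {R X : Type*} [CommSemiring R]
    (s : FreeAlgebra R X → FreeAlgebra R X → Prop) :
    Algebra.adjoin R (Set.range fun i ↦ RingQuot.mkAlgHom R s (FreeAlgebra.ι R i)) = ⊤ := by
  rw [Set.range_comp' (RingQuot.mkAlgHom R s) (FreeAlgebra.ι R), Algebra.adjoin_image,
    FreeAlgebra.adjoin_range_ι, Algebra.map_top, AlgHom.range_eq_top]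
  exact RingQuot.mkAlgHom_surjective R s

namespace PodlesSphere

noncomputable def antipodalFree : FreeAlgebra ℂ (Fin 3) →ₐ[ℂ] FreeAlgebra ℂ (Fin 3) :=
  FreeAlgebra.lift ℂ fun i ↦ -FreeAlgebra.ι ℂ i

theorem antipodalFree_ι (i : Fin 3) : antipodalFree (FreeAlgebra.ι ℂ i) = -FreeAlgebra.ι ℂ i :=
  FreeAlgebra.lift_ι_apply _ _

-- The relations are homogeneous of even degree, so the antipodal map fixes both sides.
theorem Rel.map_antipodalFree {q : ℝ} {x y : FreeAlgebra ℂ (Fin 3)} (h : Rel q x y) :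
    Rel q (antipodalFree x) (antipodalFree y) := by
  cases h <;> simpa [K, L, L', antipodalFree_ι] using by constructor

variable (q : ℝ)

local notation "𝐊" => RingQuot.mkAlgHom ℂ (Rel q) K
local notation "𝐋" => RingQuot.mkAlgHom ℂ (Rel q) L
local notation "𝐋'" => RingQuot.mkAlgHom ℂ (Rel q) L'

noncomputable def antipodal : RingQuot (Rel q) →ₐ[ℂ] RingQuot (Rel q) :=
  RingQuot.liftAlgHom ℂ ⟨(RingQuot.mkAlgHom ℂ (Rel q)).comp antipodalFree,
    fun ⦃_ _⦄ h ↦ RingQuot.mkAlgHom_rel ℂ h.map_antipodalFree⟩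

theorem antipodal_mkAlgHom (x : FreeAlgebra ℂ (Fin 3)) :
    antipodal q (RingQuot.mkAlgHom ℂ (Rel q) x) = RingQuot.mkAlgHom ℂ (Rel q) (antipodalFree x) :=
  RingQuot.liftAlgHom_mkAlgHom_apply _ _ _ _

theorem antipodal_mkAlgHom_ι (i : Fin 3) :
    antipodal q (RingQuot.mkAlgHom ℂ (Rel q) (FreeAlgebra.ι ℂ i)) =
      -RingQuot.mkAlgHom ℂ (Rel q) (FreeAlgebra.ι ℂ i) := by
  rw [antipodal_mkAlgHom, antipodalFree_ι, map_neg]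

theorem antipodal_antipodal (a : RingQuot (Rel q)) : antipodal q (antipodal q a) = a := by
  suffices (antipodal q).comp (antipodal q) = AlgHom.id ℂ _ from AlgHom.congr_fun this a
  refine RingQuot.ringQuot_ext' ℂ _ _ (FreeAlgebra.hom_ext (funext fun i ↦ ?_))
  simp [antipodal_mkAlgHom_ι]

noncomputable def antipodalEquiv : RingQuot (Rel q) ≃ₐ[ℂ] RingQuot (Rel q) :=
  AlgEquiv.ofAlgHom (antipodal q) (antipodal q) (AlgHom.ext (antipodal_antipodal q))
    (AlgHom.ext (antipodal_antipodal q))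

theorem mkAlgHom_L_mul_K : 𝐋 * 𝐊 = (q : ℂ) ^ 2 • (𝐊 * 𝐋) := by
  simpa using RingQuot.mkAlgHom_rel ℂ (Rel.rel1 (q := q))

theorem mkAlgHom_K_mul_L' : 𝐊 * 𝐋' = (q : ℂ) ^ 2 • (𝐋' * 𝐊) := by
  simpa using RingQuot.mkAlgHom_rel ℂ (Rel.rel2 (q := q))

theorem mkAlgHom_L'_mul_L : 𝐋' * 𝐋 = 1 - 𝐊 ^ 2 := by
  simpa [eq_sub_iff_add_eq, sq] using RingQuot.mkAlgHom_rel ℂ (Rel.rel3 (q := q))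

theorem mkAlgHom_L_mul_L' : 𝐋 * 𝐋' = 1 - (q : ℂ) ^ 4 • 𝐊 ^ 2 := by
  simpa [eq_sub_iff_add_eq, sq] using RingQuot.mkAlgHom_rel ℂ (Rel.rel4 (q := q))

theorem range_mkAlgHom_ι :
    (Set.range fun i ↦ RingQuot.mkAlgHom ℂ (Rel q) (FreeAlgebra.ι ℂ i)) = {𝐊, 𝐋, 𝐋'} := by
  ext
  simp [Fin.exists_fin_succ, K, L, L', eq_comm]

theorem adjoin_K_L_L'_eq_top : Algebra.adjoin ℂ {𝐊, 𝐋, 𝐋'} = ⊤ := by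
  rw [← range_mkAlgHom_ι, RingQuot.adjoin_range_mkAlgHom_ι]

theorem antipodal_eq_neg_of_mem {x : RingQuot (Rel q)} (hx : x ∈ ({𝐊, 𝐋, 𝐋'} : Set _)) :
    antipodal q x = -x := by
  obtain ⟨i, rfl⟩ := (range_mkAlgHom_ι q).symm ▸ hx
  exact antipodal_mkAlgHom_ι q i

open Pointwise in
theorem adjoin_K_L_L'_mul_self_eq :
    Algebra.adjoin ℂ ({𝐊, 𝐋, 𝐋'} * {𝐊, 𝐋, 𝐋'}) =
      Algebra.adjoin ℂ {𝐊 ^ 2, 𝐋 ^ 2, 𝐊 * 𝐋, 𝐋' ^ 2, 𝐋' * 𝐊} := by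
  set B := Algebra.adjoin ℂ ({𝐊 ^ 2, 𝐋 ^ 2, 𝐊 * 𝐋, 𝐋' ^ 2, 𝐋' * 𝐊} : Set (RingQuot (Rel q)))
  have hK2 : 𝐊 ^ 2 ∈ B := Algebra.subset_adjoin (by simp)
  have hL2 : 𝐋 ^ 2 ∈ B := Algebra.subset_adjoin (by simp)
  have hKL : 𝐊 * 𝐋 ∈ B := Algebra.subset_adjoin (by simp)
  have hL'2 : 𝐋' ^ 2 ∈ B := Algebra.subset_adjoin (by simp)
  have hL'K : 𝐋' * 𝐊 ∈ B := Algebra.subset_adjoin (by simp)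
  refine le_antisymm (Algebra.adjoin_le ?_) (Algebra.adjoin_le ?_)
  · rintro _ ⟨x, hx, y, hy, rfl⟩
    change x * y ∈ B
    simp only [Set.mem_insert_iff, Set.mem_singleton_iff] at hx hy
    rcases hx with rfl | rfl | rfl <;> rcases hy with rfl | rfl | rfl
    · rwa [← sq]
    · exact hKL
    · rw [mkAlgHom_K_mul_L']; exact B.smul_mem hL'K _
    · rw [mkAlgHom_L_mul_K]; exact B.smul_mem hKL _
    · rwa [← sq]
    · rw [mkAlgHom_L_mul_L']; exact B.sub_mem B.one_mem (B.smul_mem hK2 _)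
    · exact hL'K
    · rw [mkAlgHom_L'_mul_L]; exact B.sub_mem B.one_mem hK2
    · rwa [← sq]
  · rintro _ (rfl | rfl | rfl | rfl | rfl) <;>
      exact Algebra.subset_adjoin (by simp [sq, Set.mul_mem_mul])

end PodlesSphere

open PodlesSphere in
theorem stmt16_general (q : ℝ) :
    ∃ r₂ : RingQuot (PodlesSphere.Rel q) ≃ₐ[ℂ] RingQuot (PodlesSphere.Rel q),
      r₂ (RingQuot.mkAlgHom ℂ (PodlesSphere.Rel q) K) =
        -(RingQuot.mkAlgHom ℂ (PodlesSphere.Rel q) K) ∧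
      r₂ (RingQuot.mkAlgHom ℂ (PodlesSphere.Rel q) L) =
        -(RingQuot.mkAlgHom ℂ (PodlesSphere.Rel q) L) ∧
      r₂ (RingQuot.mkAlgHom ℂ (PodlesSphere.Rel q) L') =
        -(RingQuot.mkAlgHom ℂ (PodlesSphere.Rel q) L') ∧
      (∀ a, r₂ (r₂ a) = a) ∧
      {a | r₂ a = a} =
        (Algebra.adjoin ℂ
          ({RingQuot.mkAlgHom ℂ (PodlesSphere.Rel q) K ^ 2,
            RingQuot.mkAlgHom ℂ (PodlesSphere.Rel q) L ^ 2,
            RingQuot.mkAlgHom ℂ (PodlesSphere.Rel q) K *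
              RingQuot.mkAlgHom ℂ (PodlesSphere.Rel q) L,
            RingQuot.mkAlgHom ℂ (PodlesSphere.Rel q) L' ^ 2,
            RingQuot.mkAlgHom ℂ (PodlesSphere.Rel q) L' *
              RingQuot.mkAlgHom ℂ (PodlesSphere.Rel q) K} :
            Set (RingQuot (PodlesSphere.Rel q))) : Set (RingQuot (PodlesSphere.Rel q))) := by
  refine ⟨antipodalEquiv q, antipodal_eq_neg_of_mem q (by simp),
    antipodal_eq_neg_of_mem q (by simp), antipodal_eq_neg_of_mem q (by simp),
    antipodal_antipodal q, ?_⟩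
  rw [← adjoin_K_L_L'_mul_self_eq]
  exact Algebra.setOf_apply_eq_self_eq_adjoin_mul_self (antipodal q)
    (fun _ ↦ antipodal_eq_neg_of_mem q) (adjoin_K_L_L'_eq_top q)

open PodlesSphere in
/-- The assignment `K ↦ -K`, `L ↦ -L`, `L′ ↦ -L′` extends to a well-defined
`ℂ`-algebra automorphism `r₂` of `O(S²_{q,1})` (the antipodal `ℤ₂`-action) squaring to the
identity, and its fixed-point subalgebra is the unital subalgebra generated by
`K², L², KL, (L′)², L′K`, i.e. the coordinate algebra `O(ℝP²_q)` of the quantum real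
projective plane. -/
theorem stmt16 (q : ℝ) (hq0 : 0 < q) (hq1 : q < 1) :
    ∃ r₂ : RingQuot (PodlesSphere.Rel q) ≃ₐ[ℂ] RingQuot (PodlesSphere.Rel q),
      r₂ (RingQuot.mkAlgHom ℂ (PodlesSphere.Rel q) K) =
        -(RingQuot.mkAlgHom ℂ (PodlesSphere.Rel q) K) ∧
      r₂ (RingQuot.mkAlgHom ℂ (PodlesSphere.Rel q) L) =
        -(RingQuot.mkAlgHom ℂ (PodlesSphere.Rel q) L) ∧
      r₂ (RingQuot.mkAlgHom ℂ (PodlesSphere.Rel q) L') =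
        -(RingQuot.mkAlgHom ℂ (PodlesSphere.Rel q) L') ∧
      (∀ a, r₂ (r₂ a) = a) ∧
      {a | r₂ a = a} =
        (Algebra.adjoin ℂ
          ({RingQuot.mkAlgHom ℂ (PodlesSphere.Rel q) K ^ 2,
            RingQuot.mkAlgHom ℂ (PodlesSphere.Rel q) L ^ 2,
            RingQuot.mkAlgHom ℂ (PodlesSphere.Rel q) K *
              RingQuot.mkAlgHom ℂ (PodlesSphere.Rel q) L,
            RingQuot.mkAlgHom ℂ (PodlesSphere.Rel q) L' ^ 2,
            RingQuot.mkAlgHom ℂ (PodlesSphere.Rel q) L' *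
              RingQuot.mkAlgHom ℂ (PodlesSphere.Rel q) K} :
            Set (RingQuot (PodlesSphere.Rel q))) : Set (RingQuot (PodlesSphere.Rel q))) :=
  stmt16_general q
end
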